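/- arXiv:2308.06800 — 3 statements merged into one kernel-verified Lean document; each statement's English description precedes it below -/
import Mathlib

section
/- Let q be a complex number with 0 < |q| < 1, and let n, m be integers with n ≥ 1 and 0 ≤ m ≤ n−1. Then ∑_{k=1}^{n} k·(−1)^k·q^{k(k−1)/2}·[n choose k]_q·q^{−mk} = (−1)^{m+1}·q^{−m(m+1)/2}·(q;q)_m·(q;q)_{n−m−1}. -/
/-- The finite q-Pochhammer symbol `(a;q)_n = ∏_{k=0}^{n-1} (1 - a q^k)`. -/
noncomputable def qPoch (a q : ℂ) (n : ℕ) : ℂ := ∏ k ∈ Finset.range n, (1 - a * q ^ k)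

/-- The Gaussian (q-binomial) coefficient `[n choose k]_q`. -/
noncomputable def qBinom (q : ℂ) (n k : ℕ) : ℂ := qPoch q q n / (qPoch q q k * qPoch q q (n - k))

/-!
With `P(X) = ∏_{j<n} (1 - q^j X)`, the `q`-binomial theorem turns the left-hand side into
`x P'(x)` at `x = q^{-m}`. This `x` is the root of the factor `1 - q^m X`, so the product rule
leaves only `P'(x) = -q^m ∏_{j ≠ m} (1 - q^{j-m})`; the factors with `j > m` give
`(q;q)_{n-m-1}`, and those with `j < m`, written as `-q^{j-m} (1 - q^{m-j})`, give
`(-1)^m q^{-m(m+1)/2} (q;q)_m`.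
-/

open Finset Polynomial

section Polynomial

variable {R : Type*} [CommRing R]

lemma prod_one_sub_C_mul_X_eq_sum (a : ℕ → R) (c : ℕ → ℕ → R) (hzero : ∀ n, c n 0 = 1)
    (hsucc : ∀ n k, k < n → c (n + 1) (k + 1) = c n (k + 1) - a n * c n k)
    (htop : ∀ n, c (n + 1) (n + 1) = -a n * c n n) (n : ℕ) :
    ∏ j ∈ range n, (1 - C (a j) * X) = ∑ k ∈ range (n + 1), C (c n k) * X ^ k := by
  induction n with
  | zero => simp [hzero]
  | succ n ih =>
    have hmid : ∑ k ∈ range n, C (c (n + 1) (k + 1)) * X ^ (k + 1) =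
        ∑ k ∈ range n, C (c n (k + 1)) * X ^ (k + 1) -
          C (a n) * X * ∑ k ∈ range n, C (c n k) * X ^ k := by
      rw [mul_sum, ← sum_sub_distrib]
      refine sum_congr rfl fun k hk => ?_
      rw [hsucc n k (mem_range.1 hk), C_sub, C_mul]
      ring
    rw [prod_range_succ, ih]
    conv_rhs => rw [sum_range_succ, sum_range_succ', hmid, htop, hzero, C_mul, C_neg]
    linear_combination sum_range_succ' (fun k => C (c n k) * X ^ k) n -
      C (a n) * X * sum_range_succ (fun k => C (c n k) * X ^ k) n + congrArg C (hzero n)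

lemma sum_Icc_mul_mul_pow_eq_mul_eval_derivative (b : ℕ → R) (n : ℕ) (x : R) :
    ∑ k ∈ Icc 1 n, (k : R) * b k * x ^ k =
      x * (derivative (∑ k ∈ range (n + 1), C (b k) * X ^ k)).eval x := by
  rw [← Ico_add_one_right_eq_Icc, sum_Ico_eq_sum_range, add_tsub_cancel_right, derivative_sum,
    eval_finsetSum, mul_sum, sum_range_succ']
  simp only [derivative_C_mul_X_pow, eval_mul, eval_C, eval_pow, eval_X, add_tsub_cancel_right,
    Nat.cast_zero, mul_zero, zero_mul, add_zero]
  refine sum_congr rfl fun k _ => ?_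
  rw [add_comm 1 k]
  push_cast
  ring

lemma eval_derivative_prod_one_sub_C_mul_X {ι : Type*} [DecidableEq ι] (s : Finset ι)
    (a : ι → R) {i : ι} (hi : i ∈ s) {x : R} (hx : a i * x = 1) :
    (derivative (∏ j ∈ s, (1 - C (a j) * X))).eval x =
      -a i * ∏ j ∈ s.erase i, (1 - a j * x) := by
  rw [derivative_prod_finset, eval_finsetSum, sum_eq_single_of_mem i hi]
  · simp only [eval_mul, eval_prod, derivative_sub, derivative_one, derivative_C_mul_X, eval_sub,
      eval_one, eval_C, eval_X, zero_sub, eval_neg]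
    ring
  · intro j _ hji
    rw [eval_mul, eval_prod, prod_eq_zero (mem_erase.2 ⟨Ne.symm hji, hi⟩) (by simp [hx]),
      zero_mul]

end Polynomial

lemma prod_range_erase_eq_mul_prod_Ico {M : Type*} [CommMonoid M] (f : ℕ → M) {m n : ℕ}
    (h : m < n) :
    ∏ j ∈ (range n).erase m, f j = (∏ j ∈ range m, f j) * ∏ j ∈ Ico (m + 1) n, f j := by
  rw [← prod_union (disjoint_left.2 fun j hj hj' => by
    simp only [mem_range, mem_Ico] at hj hj'; omega)]
  congr 1
  ext j
  simp only [mem_erase, mem_range, mem_union, mem_Ico]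
  omega

variable {q : ℂ}

lemma qPoch_zero (a q : ℂ) : qPoch a q 0 = 1 :=
  prod_range_zero _

lemma qPoch_succ (a q : ℂ) (n : ℕ) : qPoch a q (n + 1) = qPoch a q n * (1 - a * q ^ n) :=
  prod_range_succ _ _

lemma one_sub_mul_pow_ne_zero (hq : ¬IsOfFinOrder q) (k : ℕ) : 1 - q * q ^ k ≠ 0 := by
  rw [sub_ne_zero, ne_comm, ← pow_succ']
  exact fun h => hq (isOfFinOrder_iff_pow_eq_one.2 ⟨k + 1, k.succ_pos, h⟩)

lemma qPoch_self_ne_zero (hq : ¬IsOfFinOrder q) (n : ℕ) : qPoch q q n ≠ 0 :=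
  prod_ne_zero_iff.2 fun k _ => one_sub_mul_pow_ne_zero hq k

lemma qBinom_zero_right (hq : ¬IsOfFinOrder q) (n : ℕ) : qBinom q n 0 = 1 := by
  rw [qBinom, Nat.sub_zero, qPoch_zero, one_mul, div_self (qPoch_self_ne_zero hq n)]

lemma qBinom_self (hq : ¬IsOfFinOrder q) (n : ℕ) : qBinom q n n = 1 := by
  rw [qBinom, Nat.sub_self, qPoch_zero, mul_one, div_self (qPoch_self_ne_zero hq n)]

lemma qBinom_succ_succ (hq : ¬IsOfFinOrder q) {n k : ℕ} (hk : k < n) :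
    qBinom q (n + 1) (k + 1) = qBinom q n (k + 1) + q ^ (n - k) * qBinom q n k := by
  obtain ⟨d, rfl⟩ := Nat.exists_eq_add_of_lt hk
  have := qPoch_self_ne_zero hq k
  have := qPoch_self_ne_zero hq d
  have := one_sub_mul_pow_ne_zero hq k
  have := one_sub_mul_pow_ne_zero hq d
  simp only [qBinom, show k + d + 1 + 1 - (k + 1) = d + 1 by omega,
    show k + d + 1 - (k + 1) = d by omega, show k + d + 1 - k = d + 1 by omega, qPoch_succ]
  field_simp
  ring

/-- The finite `q`-binomial theorem (Rothe's identity). -/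
theorem prod_one_sub_C_pow_mul_X (hq : ¬IsOfFinOrder q) (n : ℕ) :
    ∏ j ∈ range n, (1 - C (q ^ j) * X) =
      ∑ k ∈ range (n + 1), C ((-1) ^ k * q ^ (k * (k - 1) / 2) * qBinom q n k) * X ^ k := by
  refine prod_one_sub_C_mul_X_eq_sum _
    (fun n k => (-1) ^ k * q ^ (k * (k - 1) / 2) * qBinom q n k)
    (fun n => by simp [qBinom_zero_right hq]) (fun n k hk => ?_) (fun n => ?_) n
  · have hpow : q ^ k * q ^ (n - k) = q ^ n := by rw [← pow_add, Nat.add_sub_cancel' hk.le]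
    simp only [Nat.triangle_succ, pow_add, qBinom_succ_succ hq hk]
    linear_combination (-1) ^ (k + 1) * q ^ (k * (k - 1) / 2) * qBinom q n k * hpow
  · simp only [Nat.triangle_succ, pow_add, qBinom_self hq]
    ring

lemma prod_range_one_sub_pow_mul_inv_pow (hq : q ≠ 0) (m : ℕ) :
    ∏ j ∈ range m, (1 - q ^ j * (q ^ m)⁻¹) =
      (-1) ^ m * (q ^ (m * (m + 1) / 2))⁻¹ * qPoch q q m := by
  have hterm : ∀ j ∈ range m,
      1 - q ^ (m - 1 - j) * (q ^ m)⁻¹ = -1 * (q ^ (j + 1))⁻¹ * (1 - q * q ^ j) := by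
    intro j hj
    have hpow : q ^ (m - 1 - j) * q ^ (j + 1) = q ^ m := by
      rw [← pow_add]; congr 1; have := mem_range.1 hj; omega
    rw [← hpow]
    field_simp
    ring
  have hsum : ∑ j ∈ range m, (j + 1) = m * (m + 1) / 2 := by
    have h := sum_range_succ' (fun j : ℕ => j) m
    rw [add_zero] at h
    rw [← h, sum_range_id, add_tsub_cancel_right, mul_comm]
  rw [← prod_range_reflect, prod_congr rfl hterm, prod_mul_distrib, prod_mul_distrib, prod_const,
    card_range, prod_inv_distrib, prod_pow_eq_pow_sum, hsum, qPoch]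

lemma prod_Ico_one_sub_pow_mul_inv_pow (hq : q ≠ 0) (m n : ℕ) :
    ∏ j ∈ Ico (m + 1) n, (1 - q ^ j * (q ^ m)⁻¹) = qPoch q q (n - m - 1) := by
  rw [prod_Ico_eq_prod_range, Nat.sub_sub, qPoch]
  refine prod_congr rfl fun j _ => ?_
  rw [add_assoc, pow_add, mul_right_comm, mul_inv_cancel₀ (pow_ne_zero m hq), one_mul, add_comm,
    pow_succ']

theorem stmt0 (q : ℂ) (hq0 : 0 < ‖q‖) (hq1 : ‖q‖ < 1)
    (n m : ℕ) (hn : 1 ≤ n) (hm : m ≤ n - 1) :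
    ∑ k ∈ Finset.Icc 1 n,
        (k : ℂ) * (-1) ^ k * q ^ (k * (k - 1) / 2) * qBinom q n k * q ^ (-((m * k : ℕ) : ℤ)) =
      (-1) ^ (m + 1) * q ^ (-((m * (m + 1) / 2 : ℕ) : ℤ)) * qPoch q q m * qPoch q q (n - m - 1) := by
  have hq : ¬IsOfFinOrder q := fun h => hq1.ne h.norm_eq_one
  have hq_ne : q ≠ 0 := norm_pos_iff.1 hq0
  have hqm : q ^ m ≠ 0 := pow_ne_zero m hq_ne
  set x := (q ^ m)⁻¹
  calc ∑ k ∈ Icc 1 n,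
        (k : ℂ) * (-1) ^ k * q ^ (k * (k - 1) / 2) * qBinom q n k * q ^ (-((m * k : ℕ) : ℤ))
      = ∑ k ∈ Icc 1 n, (k : ℂ) * ((-1) ^ k * q ^ (k * (k - 1) / 2) * qBinom q n k) * x ^ k := by
        refine sum_congr rfl fun k _ => ?_
        rw [zpow_neg, zpow_natCast, pow_mul, inv_pow]
        ring
    _ = x * (derivative (∏ j ∈ range n, (1 - C (q ^ j) * X))).eval x := by
        rw [sum_Icc_mul_mul_pow_eq_mul_eval_derivative, prod_one_sub_C_pow_mul_X hq]
    _ = x * (-q ^ m) *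
          ((∏ j ∈ range m, (1 - q ^ j * x)) * ∏ j ∈ Ico (m + 1) n, (1 - q ^ j * x)) := by
        rw [eval_derivative_prod_one_sub_C_mul_X _ _ (mem_range.2 (by omega))
          (mul_inv_cancel₀ hqm), prod_range_erase_eq_mul_prod_Ico _ (by omega), mul_assoc]
    _ = _ := by
        rw [prod_range_one_sub_pow_mul_inv_pow hq_ne, prod_Ico_one_sub_pow_mul_inv_pow hq_ne,
          zpow_neg, zpow_natCast, mul_neg, inv_mul_cancel₀ hqm]
        ring
end

section
/- Let q be a complex number with |q| < 1 and let d(k) denote the number of positive divisors of the positive integer k. Then ∑_{k=0}^{∞} k·(−1)^k·q^{k(k+1)/2}/(q;q)_k = −(q;q)_∞ · ∑_{k=1}^{∞} d(k)·q^k. -/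
/-- The infinite q-Pochhammer symbol `(a;q)_∞ = ∏_{k=0}^{∞} (1 - a q^k)`. -/
noncomputable def qPochInf (a q : ℂ) : ℂ := ∏' k : ℕ, (1 - a * q ^ k)

open Filter Topology Finset ArithmeticFunction

lemma qPoch_self (q : ℂ) (n : ℕ) : qPoch q q n = ∏ j ∈ range n, (1 - q ^ (j + 1)) := by
  simp only [qPoch, pow_succ']

lemma qPochInf_self (q : ℂ) : qPochInf q q = ∏' j : ℕ, (1 - q ^ (j + 1)) := by
  simp only [qPochInf, pow_succ']

lemma qPoch_self_succ (q : ℂ) (n : ℕ) : qPoch q q (n + 1) = qPoch q q n * (1 - q ^ (n + 1)) := by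
  rw [qPoch_self, qPoch_self, prod_range_succ]

lemma tendsto_qPoch_self {q : ℂ} (hq : ‖q‖ < 1) :
    Tendsto (qPoch q q) atTop (𝓝 (qPochInf q q)) := by
  rw [funext (qPoch_self q), qPochInf_self]
  exact (ModularForm.multipliable_one_sub_pow hq).hasProd.tendsto_prod_nat

lemma one_sub_pow_succ_ne_zero {q : ℂ} (hq : ‖q‖ < 1) (n : ℕ) : 1 - q ^ (n + 1) ≠ 0 := by
  refine sub_ne_zero.2 fun h => ?_
  have : ‖q ^ (n + 1)‖ < 1 := by
    rw [norm_pow]; exact pow_lt_one₀ (norm_nonneg q) hq (Nat.add_one_ne_zero n)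
  rw [← h, norm_one] at this
  exact this.false

lemma tprod_one_sub_pow_succ_pos {r : ℝ} (h0 : 0 ≤ r) (h1 : r < 1) :
    0 < ∏' j : ℕ, (1 - r ^ (j + 1)) := by
  have hsum : Summable fun j : ℕ => ‖-r ^ (j + 1)‖ := by
    simpa [abs_of_nonneg h0] using
      (summable_nat_add_iff 1).mpr (summable_geometric_of_lt_one h0 h1)
  have hne := tprod_one_add_ne_zero_of_summable (f := fun j : ℕ => -r ^ (j + 1))
    (fun j => by linarith [pow_lt_one₀ h0 h1 (Nat.add_one_ne_zero j)]) hsum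
  simp only [← sub_eq_add_neg] at hne
  exact (tprod_nonneg fun j => sub_nonneg.2 (pow_le_one₀ h0 h1.le)).lt_of_ne' hne

lemma tprod_one_sub_norm_pow_succ_le_norm_qPoch {q : ℂ} (hq : ‖q‖ < 1) (n : ℕ) :
    ∏' j : ℕ, (1 - ‖q‖ ^ (j + 1)) ≤ ‖qPoch q q n‖ := by
  set r := ‖q‖
  have hfac : ∀ j : ℕ, 0 ≤ 1 - r ^ (j + 1) := fun j =>
    sub_nonneg.2 (pow_le_one₀ (norm_nonneg q) hq.le)
  have hanti : Antitone fun n => ∏ j ∈ range n, (1 - r ^ (j + 1)) := by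
    refine antitone_nat_of_succ_le fun n => ?_
    rw [prod_range_succ]
    exact mul_le_of_le_one_right (prod_nonneg fun j _ => hfac j)
      (sub_le_self _ (pow_nonneg (norm_nonneg q) _))
  have hmult : Multipliable fun j : ℕ => 1 - r ^ (j + 1) := by
    simpa [sub_eq_add_neg] using multipliable_one_add_of_summable (f := fun j : ℕ => -r ^ (j + 1))
      (by simpa [r, abs_of_nonneg (norm_nonneg q)] using
        (summable_nat_add_iff 1).mpr (summable_geometric_of_lt_one (norm_nonneg q) hq))
  calc ∏' j : ℕ, (1 - r ^ (j + 1)) ≤ ∏ j ∈ range n, (1 - r ^ (j + 1)) :=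
        hanti.le_of_tendsto hmult.hasProd.tendsto_prod_nat n
    _ ≤ ∏ j ∈ range n, ‖1 - q ^ (j + 1)‖ := by
        refine prod_le_prod (fun j _ => hfac j) fun j _ => ?_
        simpa [r, norm_pow] using norm_sub_norm_le (1 : ℂ) (q ^ (j + 1))
    _ = ‖qPoch q q n‖ := by rw [qPoch_self, norm_prod]

section PowerSeries

variable {𝕜 : Type*} [NontriviallyNormedField 𝕜] [CompleteSpace 𝕜] {a : ℕ → 𝕜}

lemma summable_mul_pow_of_summable_norm (ha : Summable (‖a ·‖)) {z : 𝕜} (hz : ‖z‖ ≤ 1) :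
    Summable fun n => a n * z ^ n :=
  ha.of_norm_bounded fun n => by
    rw [norm_mul, norm_pow]
    exact mul_le_of_le_one_right (norm_nonneg _) (pow_le_one₀ (norm_nonneg z) hz)

lemma tendsto_tsum_mul_pow_nhds_zero (ha : Summable (‖a ·‖)) :
    Tendsto (fun z => ∑' n, a n * z ^ n) (𝓝 0) (𝓝 (a 0)) := by
  have hcont : ContinuousOn (fun z => ∑' n, a n * z ^ n) (Metric.closedBall 0 1) :=
    continuousOn_tsum (fun n => by fun_prop) ha fun n z hz => by
      rw [norm_mul, norm_pow]
      exact mul_le_of_le_one_right (norm_nonneg _)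
        (pow_le_one₀ (norm_nonneg z) (mem_closedBall_zero_iff.1 hz))
  have h0 : ∑' n, a n * (0 : 𝕜) ^ n = a 0 := by
    rw [tsum_eq_single 0 fun n hn => by simp [hn]]
    simp
  simpa [h0] using (hcont.continuousAt (Metric.closedBall_mem_nhds 0 one_pos)).tendsto

end PowerSeries

lemma tsum_sub_tsum_mul_pow_of_recurrence {c w : ℕ → ℂ} {q z : ℂ}
    (hc : ∀ k, c (k + 1) * (1 - q ^ (k + 1)) = -q ^ (k + 1) * c k)
    (hz : Summable fun k => w k * c k * z ^ k) (hzq : Summable fun k => w k * c k * (z * q) ^ k) :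
    ∑' k, w k * c k * z ^ k - ∑' k, w k * c k * (z * q) ^ k =
      -(z * q) * ∑' k, w (k + 1) * c k * (z * q) ^ k := by
  have hterm : ∀ k, w (k + 1) * c (k + 1) * z ^ (k + 1) - w (k + 1) * c (k + 1) * (z * q) ^ (k + 1)
      = -(z * q) * (w (k + 1) * c k * (z * q) ^ k) := fun k => by
    linear_combination w (k + 1) * z ^ (k + 1) * hc k
  rw [← hz.tsum_sub hzq, (hz.sub hzq).tsum_eq_zero_add, ← tsum_mul_left]
  simp only [pow_zero, sub_self, zero_add, hterm]

section Lambert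

variable {q : ℂ}

lemma summable_pow_succ_div_one_sub_pow_succ (hq : ‖q‖ < 1) :
    Summable fun i : ℕ => q ^ (i + 1) / (1 - q ^ (i + 1)) := by
  have h := summable_norm_pow_mul_geometric_div_one_sub 0 hq
  simp only [pow_zero, one_mul] at h
  exact (summable_nat_add_iff (f := fun n => q ^ n / (1 - q ^ n)) 1).mpr h

lemma tsum_pow_succ_div_one_sub_pow_succ (hq : ‖q‖ < 1) :
    ∑' i : ℕ, q ^ (i + 1) / (1 - q ^ (i + 1)) =
      ∑' k : ℕ, (((k + 1).divisors.card : ℕ) : ℂ) * q ^ (k + 1) := by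
  have h := tsum_pow_div_one_sub_eq_tsum_sigma hq 0
  simp only [pow_zero, one_mul, sigma_zero_apply] at h
  rwa [tsum_pnat_eq_tsum_succ (f := fun n => q ^ n / (1 - q ^ n)),
    tsum_pnat_eq_tsum_succ (f := fun n => ((n.divisors.card : ℕ) : ℂ) * q ^ n)] at h

end Lambert

noncomputable def eulerCoeff (q : ℂ) (k : ℕ) : ℂ := (-1) ^ k * q ^ (k * (k + 1) / 2) / qPoch q q k

section EulerCoeff

variable {q : ℂ}

@[simp]
lemma eulerCoeff_zero : eulerCoeff q 0 = 1 := by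
  simp [eulerCoeff, qPoch]

lemma eulerCoeff_succ_mul (hq : ‖q‖ < 1) (k : ℕ) :
    eulerCoeff q (k + 1) * (1 - q ^ (k + 1)) = -q ^ (k + 1) * eulerCoeff q k := by
  have htri : (k + 1) * (k + 1 + 1) / 2 = k * (k + 1) / 2 + (k + 1) := by
    rw [show (k + 1) * (k + 1 + 1) = k * (k + 1) + (k + 1) * 2 by ring]
    omega
  have hk := one_sub_pow_succ_ne_zero hq k
  rw [eulerCoeff, eulerCoeff, qPoch_self_succ, htri, pow_add, pow_succ]
  field_simp [hk]
  ring

lemma norm_eulerCoeff_le (hq : ‖q‖ < 1) (k : ℕ) :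
    ‖eulerCoeff q k‖ ≤ ‖q‖ ^ k / ∏' j : ℕ, (1 - ‖q‖ ^ (j + 1)) := by
  have hk : k ≤ k * (k + 1) / 2 := by
    rw [Nat.le_div_iff_mul_le two_pos]
    rcases k with _ | k
    · simp
    · nlinarith
  rw [eulerCoeff, norm_div, norm_mul, norm_pow, norm_neg, norm_one, one_pow, one_mul, norm_pow]
  exact div_le_div₀ (by positivity) (pow_le_pow_of_le_one (norm_nonneg q) hq.le hk)
    (tprod_one_sub_pow_succ_pos (norm_nonneg q) hq)
    (tprod_one_sub_norm_pow_succ_le_norm_qPoch hq k)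

lemma summable_norm_eulerCoeff (hq : ‖q‖ < 1) : Summable fun k => ‖eulerCoeff q k‖ :=
  ((summable_geometric_of_lt_one (norm_nonneg q) hq).div_const _).of_nonneg_of_le
    (fun _ => norm_nonneg _) (norm_eulerCoeff_le hq)

lemma summable_norm_natCast_mul_eulerCoeff (hq : ‖q‖ < 1) :
    Summable fun k : ℕ => ‖(k : ℂ) * eulerCoeff q k‖ := by
  have hgeom : Summable fun k : ℕ => (k : ℝ) * ‖q‖ ^ k := by
    simpa using summable_pow_mul_geometric_of_norm_lt_one 1
      (by rwa [norm_norm] : ‖‖q‖‖ < 1)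
  refine (hgeom.div_const (∏' j : ℕ, (1 - ‖q‖ ^ (j + 1)))).of_nonneg_of_le
    (fun _ => norm_nonneg _) fun k => ?_
  rw [norm_mul, Complex.norm_natCast, mul_div_assoc]
  exact mul_le_mul_of_nonneg_left (norm_eulerCoeff_le hq k) k.cast_nonneg

end EulerCoeff

/-- `(zq;q)_∞`, by Euler's identity. -/
noncomputable def eulerSeries (q z : ℂ) : ℂ := ∑' k, eulerCoeff q k * z ^ k

/-- `z · (d/dz) eulerSeries q z`. -/
noncomputable def eulerThetaSeries (q z : ℂ) : ℂ := ∑' k : ℕ, (k : ℂ) * eulerCoeff q k * z ^ k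

section EulerSeries

variable {q : ℂ}

lemma norm_mul_le_one_of_lt_one {z : ℂ} (hq : ‖q‖ < 1) (hz : ‖z‖ ≤ 1) : ‖z * q‖ ≤ 1 := by
  rw [norm_mul]; exact mul_le_one₀ hz (norm_nonneg q) hq.le

lemma norm_pow_le_one (hq : ‖q‖ < 1) (n : ℕ) : ‖q ^ n‖ ≤ 1 := by
  rw [norm_pow]; exact pow_le_one₀ (norm_nonneg q) hq.le

lemma eulerSeries_eq_mul (hq : ‖q‖ < 1) {z : ℂ} (hz : ‖z‖ ≤ 1) :
    eulerSeries q z = (1 - z * q) * eulerSeries q (z * q) := by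
  have hs := summable_norm_eulerCoeff hq
  have key := tsum_sub_tsum_mul_pow_of_recurrence (w := 1) (eulerCoeff_succ_mul hq)
    (by simpa using summable_mul_pow_of_summable_norm hs hz)
    (by simpa using summable_mul_pow_of_summable_norm hs (norm_mul_le_one_of_lt_one hq hz))
  simp only [Pi.one_apply, one_mul] at key
  rw [eulerSeries, eulerSeries]
  linear_combination key

lemma eulerThetaSeries_eq_mul (hq : ‖q‖ < 1) {z : ℂ} (hz : ‖z‖ ≤ 1) :
    eulerThetaSeries q z =
      (1 - z * q) * eulerThetaSeries q (z * q) - z * q * eulerSeries q (z * q) := by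
  have hzq := norm_mul_le_one_of_lt_one hq hz
  have hs := summable_norm_natCast_mul_eulerCoeff hq
  have key := tsum_sub_tsum_mul_pow_of_recurrence (w := fun k => (k : ℂ)) (eulerCoeff_succ_mul hq)
    (by simpa only [mul_assoc] using summable_mul_pow_of_summable_norm hs hz)
    (by simpa only [mul_assoc] using summable_mul_pow_of_summable_norm hs hzq)
  have hsplit : ∑' k : ℕ, ((k + 1 : ℕ) : ℂ) * eulerCoeff q k * (z * q) ^ k =
      eulerThetaSeries q (z * q) + eulerSeries q (z * q) := by
    rw [eulerThetaSeries, eulerSeries, ← Summable.tsum_add]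
    · exact tsum_congr fun k => by push_cast; ring
    · simpa only [mul_assoc] using summable_mul_pow_of_summable_norm hs hzq
    · exact summable_mul_pow_of_summable_norm (summable_norm_eulerCoeff hq) hzq
  rw [hsplit] at key
  unfold eulerThetaSeries at key ⊢
  linear_combination key

lemma eulerSeries_one_eq_qPoch_mul (hq : ‖q‖ < 1) (n : ℕ) :
    eulerSeries q 1 = qPoch q q n * eulerSeries q (q ^ n) := by
  induction n with
  | zero => simp [qPoch]
  | succ n ih =>
    rw [ih, eulerSeries_eq_mul hq (norm_pow_le_one hq n), qPoch_self_succ, ← pow_succ]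
    ring

lemma eulerThetaSeries_one_eq_qPoch_mul_sub (hq : ‖q‖ < 1) (n : ℕ) :
    eulerThetaSeries q 1 = qPoch q q n * eulerThetaSeries q (q ^ n) -
      eulerSeries q 1 * ∑ i ∈ range n, q ^ (i + 1) / (1 - q ^ (i + 1)) := by
  induction n with
  | zero => simp [qPoch]
  | succ n ih =>
    have hF := eulerSeries_one_eq_qPoch_mul hq (n + 1)
    rw [qPoch_self_succ] at hF
    rw [ih, eulerThetaSeries_eq_mul hq (norm_pow_le_one hq n), qPoch_self_succ, ← pow_succ,
      sum_range_succ, hF]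
    field_simp [one_sub_pow_succ_ne_zero hq n]
    ring

lemma tendsto_eulerSeries_pow (hq : ‖q‖ < 1) :
    Tendsto (fun n : ℕ => eulerSeries q (q ^ n)) atTop (𝓝 1) := by
  have h := tendsto_tsum_mul_pow_nhds_zero (summable_norm_eulerCoeff hq)
  rw [eulerCoeff_zero] at h
  exact h.comp (tendsto_pow_atTop_nhds_zero_of_norm_lt_one hq)

lemma tendsto_eulerThetaSeries_pow (hq : ‖q‖ < 1) :
    Tendsto (fun n : ℕ => eulerThetaSeries q (q ^ n)) atTop (𝓝 0) := by
  have h := tendsto_tsum_mul_pow_nhds_zero (summable_norm_natCast_mul_eulerCoeff hq)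
  rw [Nat.cast_zero, zero_mul] at h
  exact h.comp (tendsto_pow_atTop_nhds_zero_of_norm_lt_one hq)

lemma eulerSeries_one (hq : ‖q‖ < 1) : eulerSeries q 1 = qPochInf q q := by
  have h := (tendsto_qPoch_self hq).mul (tendsto_eulerSeries_pow hq)
  rw [mul_one, ← funext (eulerSeries_one_eq_qPoch_mul hq)] at h
  exact tendsto_nhds_unique tendsto_const_nhds h

lemma eulerThetaSeries_one (hq : ‖q‖ < 1) :
    eulerThetaSeries q 1 = -qPochInf q q * ∑' i : ℕ, q ^ (i + 1) / (1 - q ^ (i + 1)) := by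
  have h := ((tendsto_qPoch_self hq).mul (tendsto_eulerThetaSeries_pow hq)).sub
    ((summable_pow_succ_div_one_sub_pow_succ hq).hasSum.tendsto_sum_nat.const_mul (eulerSeries q 1))
  rw [← funext (eulerThetaSeries_one_eq_qPoch_mul_sub hq), eulerSeries_one hq] at h
  rw [tendsto_nhds_unique tendsto_const_nhds h]
  ring

end EulerSeries

theorem stmt2 (q : ℂ) (hq : ‖q‖ < 1) :
    ∑' k : ℕ, (k : ℂ) * (-1) ^ k * q ^ (k * (k + 1) / 2) / qPoch q q k =
      -(qPochInf q q) * ∑' k : ℕ, (((k + 1).divisors.card : ℕ) : ℂ) * q ^ (k + 1) := by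
  have h : ∑' k : ℕ, (k : ℂ) * (-1) ^ k * q ^ (k * (k + 1) / 2) / qPoch q q k =
      eulerThetaSeries q 1 := by
    simp only [eulerThetaSeries, eulerCoeff, one_pow, mul_one, mul_div_assoc, mul_assoc]
  rw [h, eulerThetaSeries_one hq, tsum_pow_succ_div_one_sub_pow_succ hq]
end

section
/- Let q be a complex number with 0 < |q| < 1. Then ∑_{n=2}^{∞} ((1−q^{2n−1})/((1−q^{n−1})(1−q^n)))·(−1)^n·q^{3n(n−1)/2} = (q;q)_∞ − (1−2q)/(1−q). -/
open Finset

def pentagonalTerm {R : Type*} [Ring R] (x : R) (k : ℕ) : R :=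
  (-1) ^ k * (x ^ pentagonal (-k) - x ^ pentagonal (k + 1))

def pentagonalFrac {K : Type*} [DivisionRing K] (q : K) (j : ℕ) : K :=
  (-1) ^ j * q ^ pentagonal (-j) / (1 - q ^ j)

theorem two_mul_pentagonal_neg_natCast (k : ℕ) : 2 * pentagonal (-k) = k * (3 * k + 1) := by
  exact_mod_cast two_mul_natCast_pentagonal_neg k

theorem two_mul_pentagonal_natCast_add_one (k : ℕ) :
    2 * pentagonal (k + 1) = (k + 1) * (3 * k + 2) := by
  have h : ((k : ℤ) + 1) * (3 * (k + 1) - 1) = (((k + 1) * (3 * k + 2) : ℕ) : ℤ) := by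
    push_cast; ring
  exact_mod_cast (two_mul_natCast_pentagonal (k + 1)).trans h

theorem le_pentagonal_neg_natCast (k : ℕ) : k ≤ pentagonal (-k) := by
  nlinarith [two_mul_pentagonal_neg_natCast k]

theorem le_pentagonal_natCast_add_one (k : ℕ) : k ≤ pentagonal (k + 1) := by
  nlinarith [two_mul_pentagonal_natCast_add_one k]

section NormedRing

variable {R : Type*} [NormedCommRing R] [NormOneClass R] {x : R}

theorem norm_neg_one_pow_mul_le (k : ℕ) (y : R) : ‖(-1) ^ k * y‖ ≤ ‖y‖ :=
  (norm_mul_le _ _).trans <| by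
    simpa using mul_le_mul_of_nonneg_right (norm_pow_le (-1 : R) k) (norm_nonneg y)

theorem norm_pow_le_norm_pow_of_le (hx : ‖x‖ ≤ 1) {k m : ℕ} (hkm : k ≤ m) :
    ‖x ^ m‖ ≤ ‖x‖ ^ k :=
  (norm_pow_le _ _).trans (pow_le_pow_of_le_one (norm_nonneg x) hx hkm)

theorem one_sub_norm_le_norm_one_sub_pow (hx : ‖x‖ ≤ 1) {k : ℕ} (hk : k ≠ 0) :
    1 - ‖x‖ ≤ ‖1 - x ^ k‖ := by
  have := norm_pow_le_norm_pow_of_le hx (Nat.one_le_iff_ne_zero.2 hk)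
  have := norm_sub_norm_le (1 : R) (x ^ k)
  rw [norm_one, pow_one] at *
  linarith

theorem norm_prod_one_sub_pow_le_exp (hx : ‖x‖ < 1) (s : Finset ℕ) {e : ℕ → ℕ}
    (he : e.Injective) : ‖∏ i ∈ s, (1 - x ^ e i)‖ ≤ Real.exp (1 - ‖x‖)⁻¹ := by
  have hgeom := summable_geometric_of_lt_one (norm_nonneg x) hx
  calc ‖∏ i ∈ s, (1 - x ^ e i)‖ ≤ ∏ i ∈ s, ‖1 - x ^ e i‖ := norm_prod_le _ _
    _ ≤ ∏ i ∈ s, (1 + ‖x‖ ^ e i) := by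
        gcongr with i
        exact (norm_sub_le _ _).trans (by rw [norm_one]; gcongr; exact norm_pow_le _ _)
    _ ≤ Real.exp (∑ i ∈ s, ‖x‖ ^ e i) :=
        Real.prod_one_add_le_exp_sum _ fun _ => pow_nonneg (norm_nonneg x) _
    _ ≤ Real.exp (∑' j, ‖x‖ ^ j) := by
        gcongr
        exact ((hgeom.comp_injective he).sum_le_tsum _ fun _ _ =>
          pow_nonneg (norm_nonneg x) _).trans
            (tsum_comp_le_tsum_of_inj hgeom (fun _ => by positivity) he)
    _ = Real.exp (1 - ‖x‖)⁻¹ := by rw [tsum_geometric_of_lt_one (norm_nonneg x) hx]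

theorem norm_pow_mul_prod_one_sub_pow_le (hx : ‖x‖ < 1) (k n : ℕ) :
    ‖x ^ ((k + 1) * n) * ∏ i ∈ range (n + 1), (1 - x ^ (k + i + 1))‖ ≤
      Real.exp (1 - ‖x‖)⁻¹ * ‖x‖ ^ n := by
  rw [mul_comm (Real.exp _)]
  exact (norm_mul_le _ _).trans (mul_le_mul
    (norm_pow_le_norm_pow_of_le hx.le (Nat.le_mul_of_pos_left n k.succ_pos))
    (norm_prod_one_sub_pow_le_exp hx _ fun a b h => by simpa using h)
    (norm_nonneg _) (by positivity))

theorem norm_tsum_pow_mul_prod_one_sub_pow_le (hx : ‖x‖ < 1) (k : ℕ) :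
    ‖∑' n, x ^ ((k + 1) * n) * ∏ i ∈ range (n + 1), (1 - x ^ (k + i + 1))‖ ≤
      Real.exp (1 - ‖x‖)⁻¹ * (1 - ‖x‖)⁻¹ :=
  tsum_of_norm_bounded ((hasSum_geometric_of_lt_one (norm_nonneg x) hx).mul_left _)
    (norm_pow_mul_prod_one_sub_pow_le hx k)

variable [CompleteSpace R]

theorem summable_pentagonalTerm (hx : ‖x‖ < 1) : Summable (pentagonalTerm x) := by
  refine .of_norm_bounded ((summable_geometric_of_lt_one (norm_nonneg x) hx).mul_left 2)
    fun k => (norm_neg_one_pow_mul_le _ _).trans ((norm_sub_le _ _).trans ?_)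
  linarith [norm_pow_le_norm_pow_of_le hx.le (le_pentagonal_neg_natCast k),
    norm_pow_le_norm_pow_of_le hx.le (le_pentagonal_natCast_add_one k)]

theorem tprod_one_sub_pow_eq_tsum_pentagonalTerm (hx : ‖x‖ < 1) :
    ∏' n, (1 - x ^ (n + 1)) = ∑' k, pentagonalTerm x k := by
  have hgeom := summable_geometric_of_lt_one (norm_nonneg x) hx
  refine Pentagonal.tprod_one_sub_pow (tendsto_pow_atTop_nhds_zero_of_norm_lt_one hx)
    (fun k => .of_norm_bounded (hgeom.mul_left _) (norm_pow_mul_prod_one_sub_pow_le hx k))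
    (fun k => ?_) (summable_pentagonalTerm hx) ?_
  · simp_rw [sub_eq_add_neg]
    refine multipliable_one_add_of_summable (.of_nonneg_of_le (fun _ => norm_nonneg _)
      (fun n => ?_) hgeom)
    rw [norm_neg]
    exact norm_pow_le_norm_pow_of_le hx.le (by omega)
  · have hlim := (tendsto_pow_atTop_nhds_zero_of_lt_one (norm_nonneg x) hx).const_mul
      (Real.exp (1 - ‖x‖)⁻¹ * (1 - ‖x‖)⁻¹)
    rw [mul_zero] at hlim
    refine squeeze_zero_norm (fun k => ?_) hlim
    have hk : k ≤ (k + 1) * (3 * k + 4) / 2 := by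
      rw [Nat.le_div_iff_mul_le two_pos]
      nlinarith
    rw [mul_comm _ (_ ^ k)]
    exact (norm_mul_le _ _).trans (mul_le_mul
      ((norm_neg_one_pow_mul_le _ _).trans (norm_pow_le_norm_pow_of_le hx.le hk))
      (norm_tsum_pow_mul_prod_one_sub_pow_le hx k) (norm_nonneg _) (by positivity))

end NormedRing

theorem summand_eq_pentagonalTerm_add_sub {K : Type*} [Field K] (q : K) (n : ℕ)
    (h1 : 1 - q ^ (n + 1) ≠ 0) (h2 : 1 - q ^ (n + 2) ≠ 0) :
    (1 - q ^ (2 * (n + 2) - 1)) / ((1 - q ^ (n + 1)) * (1 - q ^ (n + 2))) * (-1) ^ (n + 2) *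
        q ^ (3 * (n + 2) * (n + 1) / 2) =
      pentagonalTerm q (n + 1) + (pentagonalFrac q (n + 2) - pentagonalFrac q (n + 1)) := by
  have hA := two_mul_pentagonal_neg_natCast (n + 1)
  have hB := two_mul_pentagonal_natCast_add_one (n + 1)
  have hC := two_mul_pentagonal_neg_natCast (n + 2)
  simp only [pentagonalTerm, pentagonalFrac]
  generalize pentagonal (-↑(n + 1)) = A at hA ⊢
  generalize pentagonal (↑(n + 1) + 1) = B at hB ⊢
  generalize pentagonal (-↑(n + 2)) = C at hC ⊢
  obtain rfl : B = A + (2 * n + 3) := by linarith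
  obtain rfl : C = A + (3 * n + 5) := by linarith
  rw [show 2 * (n + 2) - 1 = 2 * n + 3 by omega,
    show 3 * (n + 2) * (n + 1) / 2 = A + (n + 1) from
      Nat.div_eq_of_eq_mul_left two_pos (by linarith)]
  field_simp
  ring

section NormedField

variable {K : Type*} [NormedField K] [CompleteSpace K] {q : K}

theorem summable_pentagonalFrac_succ (hq : ‖q‖ < 1) :
    Summable fun n => pentagonalFrac q (n + 1) := by
  refine .of_norm_bounded ((summable_geometric_of_lt_one (norm_nonneg q) hq).div_const
    (1 - ‖q‖)) fun n => ?_
  rw [pentagonalFrac, norm_div, norm_mul, norm_pow, norm_neg, norm_one, one_pow, one_mul]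
  exact div_le_div₀ (by positivity) (norm_pow_le_norm_pow_of_le hq.le (by
    linarith [le_pentagonal_neg_natCast (n + 1)])) (by linarith)
    (one_sub_norm_le_norm_one_sub_pow hq.le n.succ_ne_zero)

theorem tsum_eq_tprod_one_sub_pow_sub (hq : ‖q‖ < 1) :
    ∑' n : ℕ, ((1 - q ^ (2 * (n + 2) - 1)) / ((1 - q ^ (n + 1)) * (1 - q ^ (n + 2)))) *
        (-1) ^ (n + 2) * q ^ (3 * (n + 2) * (n + 1) / 2) =
      ∏' n, (1 - q ^ (n + 1)) - (1 - 2 * q) / (1 - q) := by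
  have hne (k : ℕ) : (1 : K) - q ^ (k + 1) ≠ 0 := norm_pos_iff.mp <|
    (sub_pos.2 hq).trans_le (one_sub_norm_le_norm_one_sub_pow hq.le k.succ_ne_zero)
  have ht := summable_pentagonalTerm hq
  have hw := summable_pentagonalFrac_succ hq
  have ht' : Summable fun n => pentagonalTerm q (n + 1) := (summable_nat_add_iff 1).mpr ht
  have hw' : Summable fun n => pentagonalFrac q (n + 2) := by
    simpa using (summable_nat_add_iff 1).mpr hw
  calc _ = ∑' n, (pentagonalTerm q (n + 1) +
          (pentagonalFrac q (n + 2) - pentagonalFrac q (n + 1))) :=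
        tsum_congr fun n => summand_eq_pentagonalTerm_add_sub q n (hne n) (hne (n + 1))
    _ = ∑' n, pentagonalTerm q (n + 1) +
          (∑' n, pentagonalFrac q (n + 2) - ∑' n, pentagonalFrac q (n + 1)) := by
        rw [ht'.tsum_add (hw'.sub hw), hw'.tsum_sub hw]
    _ = ∑' k, pentagonalTerm q k - pentagonalTerm q 0 - pentagonalFrac q 1 := by
        rw [ht.tsum_eq_zero_add, hw.tsum_eq_zero_add]
        ring
    _ = ∏' n, (1 - q ^ (n + 1)) - (1 - 2 * q) / (1 - q) := by
        have h1 : (1 : K) - q ≠ 0 := by simpa using hne 0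
        rw [← tprod_one_sub_pow_eq_tsum_pentagonalTerm hq]
        simp only [pentagonalTerm, pentagonalFrac]
        rw [show pentagonal (-((0 : ℕ) : ℤ)) = 0 by decide,
          show pentagonal (((0 : ℕ) : ℤ) + 1) = 1 by decide,
          show pentagonal (-((1 : ℕ) : ℤ)) = 2 by decide]
        field_simp
        ring

end NormedField

theorem stmt15_general (q : ℂ) (hq1 : ‖q‖ < 1) :
    ∑' n : ℕ, ((1 - q ^ (2 * (n + 2) - 1)) / ((1 - q ^ (n + 1)) * (1 - q ^ (n + 2)))) *
        (-1) ^ (n + 2) * q ^ (3 * (n + 2) * (n + 1) / 2) =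
      qPochInf q q - (1 - 2 * q) / (1 - q) := by
  simp only [qPochInf, ← pow_succ']
  exact tsum_eq_tprod_one_sub_pow_sub hq1

/-- The series on the left runs over `n ≥ 2`; here the summation index is shifted by two,
so that the term of index `n : ℕ` corresponds to `n + 2`. -/
theorem stmt15 (q : ℂ) (hq0 : 0 < ‖q‖) (hq1 : ‖q‖ < 1) :
    ∑' n : ℕ, ((1 - q ^ (2 * (n + 2) - 1)) / ((1 - q ^ (n + 1)) * (1 - q ^ (n + 2)))) *
        (-1) ^ (n + 2) * q ^ (3 * (n + 2) * (n + 1) / 2) =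
      qPochInf q q - (1 - 2 * q) / (1 - q) :=
  stmt15_general q hq1
end
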